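/- arXiv:2402.14271 — 3 statements merged into one kernel-verified Lean document; each statement's English description precedes it below -/
import Mathlib

section
/- Let (s_n) be positive reals with s_n → 0 and lim_{n→∞} s_n^{1/n} = L/K where 1 < L < K. Then there exists a constant C such that for all sufficiently large n, (s_{n-1} K^{n-1}) · ∑_{j=n}^{∞} 1/(s_j K^j) ≤ C; in particular one may take C = 2/ln K when additionally |g'(x)|/g(x) ≤ (1/2)·ln K for an interpolating C¹ function g with g(j) = 1/s_j. -/
/-!
The bound `|g'| / g ≤ (log K) / 2` integrates to `g x ≤ g y · K^((x - y)/2)` for large `y ≤ x`.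
Since `g j = 1 / s j`, the terms `s (n-1) K^(n-1) / (s (n+j) K^(n+j))` are then dominated by the
geometric sequence `ρ^(j+1)` with `ρ = K^(-1/2)`, whose sum `ρ / (1 - ρ)` is at most
`1 / (-log ρ) = 2 / log K` because `log x ≤ x - 1`.
-/

open Real Set Filter

theorem le_mul_exp_of_abs_deriv_div_le {f : ℝ → ℝ} {a b c : ℝ} (hab : a ≤ b)
    (hf : ∀ x ∈ Icc a b, DifferentiableAt ℝ f x) (hpos : ∀ x ∈ Icc a b, 0 < f x)
    (hbound : ∀ x ∈ Icc a b, |deriv f x| / f x ≤ c) :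
    f b ≤ f a * exp (c * (b - a)) := by
  have hgronwall := norm_le_gronwallBound_of_norm_deriv_right_le (f' := deriv f) (ε := 0)
    (fun x hx => (hf x hx).continuousAt.continuousWithinAt)
    (fun x hx => (hf x (Ico_subset_Icc_self hx)).hasDerivAt.hasDerivWithinAt) le_rfl
    (fun x hx => by
      have hx' := Ico_subset_Icc_self hx
      rw [Real.norm_eq_abs, Real.norm_eq_abs, abs_of_pos (hpos x hx'), add_zero]
      exact (div_le_iff₀ (hpos x hx')).mp (hbound x hx'))
    b ⟨hab, le_rfl⟩
  rwa [gronwallBound_ε0, Real.norm_eq_abs, Real.norm_eq_abs, abs_of_pos (hpos b ⟨hab, le_rfl⟩),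
    abs_of_pos (hpos a ⟨le_rfl, hab⟩)] at hgronwall

theorem div_one_sub_le_inv_neg_log {ρ : ℝ} (h0 : 0 < ρ) (h1 : ρ < 1) :
    ρ / (1 - ρ) ≤ (-log ρ)⁻¹ := by
  have hlog : -log ρ ≤ ρ⁻¹ - 1 := by
    rw [← log_inv]
    exact log_le_sub_one_of_pos (inv_pos.mpr h0)
  have hlog_pos : 0 < -log ρ := neg_pos.mpr (log_neg h0 h1)
  rw [div_le_iff₀ (sub_pos.mpr h1), inv_mul_eq_div, le_div_iff₀ hlog_pos]
  calc ρ * -log ρ ≤ ρ * (ρ⁻¹ - 1) := mul_le_mul_of_nonneg_left hlog h0.le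
    _ = 1 - ρ := by field_simp

theorem hasSum_geometric_pow_succ {ρ : ℝ} (h0 : 0 < ρ) (h1 : ρ < 1) :
    HasSum (fun j : ℕ => ρ ^ (j + 1)) (ρ / (1 - ρ)) := by
  simpa [pow_succ', div_eq_mul_inv] using (hasSum_geometric_of_lt_one h0.le h1).mul_left ρ

theorem mul_tsum_tail_le {s : ℕ → ℝ} {K c : ℝ} (hs : ∀ n, 0 < s n) (hK : 0 < K)
    (hc : c < log K) (m : ℕ) (hdecay : ∀ j : ℕ, s m ≤ s (m + 1 + j) * exp (c * (j + 1))) :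
    s m * K ^ m * ∑' j : ℕ, 1 / (s (m + 1 + j) * K ^ (m + 1 + j)) ≤ 1 / (log K - c) := by
  set ρ := exp c / K
  have hρ0 : 0 < ρ := by positivity
  have hlogρ : log ρ = c - log K := by rw [log_div (exp_pos c).ne' hK.ne', log_exp]
  have hρ1 : ρ < 1 := by
    rw [div_lt_one hK, ← exp_log hK]
    exact exp_lt_exp.mpr hc
  have hterm : ∀ j : ℕ, s m * K ^ m * (1 / (s (m + 1 + j) * K ^ (m + 1 + j))) ≤ ρ ^ (j + 1) := by
    intro j
    have hsj := hs (m + 1 + j)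
    have hK' : K ^ (m + 1 + j) = K ^ m * K ^ (j + 1) := by rw [← pow_add]; ring_nf
    have hexp : exp (c * (j + 1)) = exp c ^ (j + 1) := by
      rw [← exp_nat_mul]; push_cast; ring_nf
    rw [div_pow, hK', ← hexp, le_div_iff₀ (by positivity)]
    calc s m * K ^ m * (1 / (s (m + 1 + j) * (K ^ m * K ^ (j + 1)))) * K ^ (j + 1)
        = s m / s (m + 1 + j) := by field_simp
      _ ≤ exp (c * (j + 1)) := (div_le_iff₀ hsj).mpr (by linarith [hdecay j])
  have hgeom := hasSum_geometric_pow_succ hρ0 hρ1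
  have hnonneg : ∀ j : ℕ, 0 ≤ 1 / (s (m + 1 + j) * K ^ (m + 1 + j)) := fun j => by
    have := hs (m + 1 + j); positivity
  have hsummable : Summable fun j : ℕ => 1 / (s (m + 1 + j) * K ^ (m + 1 + j)) := by
    refine (hgeom.summable.div_const (s m * K ^ m)).of_nonneg_of_le hnonneg fun j => ?_
    rw [le_div_iff₀ (by have := hs m; positivity), mul_comm]
    exact hterm j
  calc s m * K ^ m * ∑' j : ℕ, 1 / (s (m + 1 + j) * K ^ (m + 1 + j))
      ≤ ρ / (1 - ρ) := by
        rw [← tsum_mul_left]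
        exact hasSum_le hterm (hsummable.mul_left _).hasSum hgeom
    _ ≤ (-log ρ)⁻¹ := div_one_sub_le_inv_neg_log hρ0 hρ1
    _ = 1 / (log K - c) := by rw [hlogρ, one_div]; ring_nf

theorem stmt_8_general (s : ℕ → ℝ) (hs : ∀ n, 0 < s n) (K L : ℝ) (hL : 1 < L) (hLK : L < K)
    (g : ℝ → ℝ) (hg : ContDiff ℝ 1 g) (hgpos : ∀ x > (0 : ℝ), 0 < g x)
    (hgj : ∀ j : ℕ, 1 ≤ j → g j = 1 / s j)
    (hgd : ∀ᶠ x : ℝ in Filter.atTop, |deriv g x| / g x ≤ (1 / 2) * Real.log K) :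
    ∀ᶠ n : ℕ in Filter.atTop,
      s (n - 1) * K ^ (n - 1) * (∑' j : ℕ, 1 / (s (n + j) * K ^ (n + j))) ≤
        2 / Real.log K := by
  have hK : 1 < K := hL.trans hLK
  have hlogK : 0 < log K := log_pos hK
  obtain ⟨N, hN⟩ := eventually_atTop.mp hgd
  filter_upwards [eventually_ge_atTop (⌈N⌉₊ + 2)] with n hn
  obtain ⟨m, rfl⟩ : ∃ m, n = m + 1 := ⟨n - 1, by omega⟩
  have hm1 : 1 ≤ m := by omega
  have hmN : N ≤ m := (Nat.le_ceil N).trans (by exact_mod_cast (by omega : ⌈N⌉₊ ≤ m))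
  have hdecay (j : ℕ) : s m ≤ s (m + 1 + j) * exp (1 / 2 * log K * (j + 1)) := by
    have hgrowth := le_mul_exp_of_abs_deriv_div_le (f := g) (a := m) (b := (m + 1 + j : ℕ))
      (by push_cast; linarith) (fun x _ => hg.differentiable one_ne_zero x)
      (fun x hx => hgpos x (by linarith [hx.1, (Nat.one_le_cast (α := ℝ)).mpr hm1]))
      (fun x hx => hN x (hmN.trans hx.1))
    rw [hgj _ (by omega), hgj _ hm1, Nat.cast_add, Nat.cast_add_one,
      show (m : ℝ) + 1 + j - m = j + 1 by ring, one_div_mul_eq_div,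
      div_le_div_iff₀ (hs _) (hs m), one_mul] at hgrowth
    rwa [mul_comm]
  have htail := mul_tsum_tail_le hs (by linarith) (by linarith : 1 / 2 * log K < log K) m hdecay
  rw [show 1 / (log K - 1 / 2 * log K) = 2 / log K by field_simp; ring] at htail
  rwa [Nat.add_sub_cancel]

theorem stmt_8 (s : ℕ → ℝ) (hs : ∀ n, 0 < s n) (K L : ℝ) (hL : 1 < L) (hLK : L < K)
    (hs0 : Filter.Tendsto s Filter.atTop (nhds 0))
    (hroot : Filter.Tendsto (fun n : ℕ => (s n) ^ ((1 : ℝ) / n))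
      Filter.atTop (nhds (L / K)))
    (g : ℝ → ℝ) (hg : ContDiff ℝ 1 g) (hgpos : ∀ x > (0 : ℝ), 0 < g x)
    (hgj : ∀ j : ℕ, 1 ≤ j → g j = 1 / s j)
    (hgmono : Filter.Tendsto g Filter.atTop Filter.atTop)
    (hgK : Filter.Tendsto (fun x : ℝ => (g x) ^ (1 / x)) Filter.atTop (nhds (K / L)))
    (hgd : ∀ᶠ x : ℝ in Filter.atTop, |deriv g x| / g x ≤ (1 / 2) * Real.log K) :
    ∀ᶠ n : ℕ in Filter.atTop,
      s (n - 1) * K ^ (n - 1) * (∑' j : ℕ, 1 / (s (n + j) * K ^ (n + j))) ≤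
        2 / Real.log K :=
  stmt_8_general s hs K L hL hLK g hg hgpos hgj hgd
end

section
/- Define h : ℕ → ℂ → ℂ by h n z = 2^n z for odd n and h n z = z/2^{n+3} for even n. Then the difference equation b_{n+1} = h n b_n does not have Hyers-Ulam stability: for every ε > 0 there is a sequence (a_n) with |a_{n+1} - h n a_n| ≤ ε such that every solution (b_n) of b_{n+1} = h n b_n satisfies sup_n |b_n - a_n| = ∞. -/
/-!
Write `h n z = c n * z`. If `a` solves the equation up to a constant error `ε` and `b` solves it
exactly, then `d = b - a` satisfies `d (n + 1) = c n * d n - ε`, so over two steps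
`d (n + 2) = c (n + 1) * c n * d n - (c (n + 1) + 1) * ε`. Here every two-step product
`c (n + 1) * c n` has modulus at most `1/4` while `c (2k + 1) = 2 ^ (2k + 1)` is unbounded, so `d`
cannot stay bounded.
-/

open Set

noncomputable def perturbedSolution (c : ℕ → ℂ) (ε : ℂ) : ℕ → ℂ
  | 0 => 0
  | n + 1 => c n * perturbedSolution c ε n + ε

section TwoStep

variable {c a b : ℕ → ℂ} {ε : ℂ}

lemma sub_add_two_eq (ha : ∀ n ≥ 1, a (n + 1) = c n * a n + ε)
    (hb : ∀ n ≥ 1, b (n + 1) = c n * b n) {n : ℕ} (hn : 1 ≤ n) :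
    b (n + 2) - a (n + 2) = c (n + 1) * c n * (b n - a n) - (c (n + 1) + 1) * ε := by
  rw [hb (n + 1) (by omega), ha (n + 1) (by omega), hb n hn, ha n hn]
  ring

lemma norm_add_one_mul_le (ha : ∀ n ≥ 1, a (n + 1) = c n * a n + ε)
    (hb : ∀ n ≥ 1, b (n + 1) = c n * b n) {M : ℝ} (hM : ∀ n, ‖b n - a n‖ ≤ M)
    {n : ℕ} (hn : 1 ≤ n) :
    ‖c (n + 1) + 1‖ * ‖ε‖ ≤ ‖c (n + 1) * c n‖ * M + M := by
  have hε : (c (n + 1) + 1) * ε = c (n + 1) * c n * (b n - a n) - (b (n + 2) - a (n + 2)) := by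
    rw [sub_add_two_eq ha hb hn]
    ring
  calc ‖c (n + 1) + 1‖ * ‖ε‖ = ‖(c (n + 1) + 1) * ε‖ := (norm_mul _ _).symm
    _ ≤ ‖c (n + 1) * c n‖ * ‖b n - a n‖ + ‖b (n + 2) - a (n + 2)‖ := by
      rw [hε, ← norm_mul]
      exact norm_sub_le _ _
    _ ≤ ‖c (n + 1) * c n‖ * M + M := by
      gcongr
      exacts [hM n, hM (n + 2)]

theorem not_bddAbove_norm_sub_of_two_step_bdd (hε : ε ≠ 0) {K : ℝ}
    (hK : ∀ n, ‖c (n + 1) * c n‖ ≤ K) (hc : ¬ BddAbove (range fun n => ‖c (n + 2)‖))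
    (ha : ∀ n ≥ 1, a (n + 1) = c n * a n + ε) (hb : ∀ n ≥ 1, b (n + 1) = c n * b n) :
    ¬ BddAbove (range fun n => ‖b n - a n‖) := by
  rintro ⟨M, hM⟩
  have hM : ∀ n, ‖b n - a n‖ ≤ M := fun n => hM ⟨n, rfl⟩
  have hM0 : 0 ≤ M := (norm_nonneg _).trans (hM 0)
  refine hc ⟨(K * M + M) / ‖ε‖ + 1, ?_⟩
  rintro _ ⟨n, rfl⟩
  have hstep := norm_add_one_mul_le ha hb hM (Nat.le_add_left 1 n)
  have hKM := mul_le_mul_of_nonneg_right (hK (n + 1)) hM0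
  have hshift : ‖c (n + 2) + 1‖ ≤ (K * M + M) / ‖ε‖ := by
    rw [le_div_iff₀ (norm_pos_iff.mpr hε)]
    linarith
  have htri := norm_sub_le (c (n + 2) + 1) 1
  rw [add_sub_cancel_right, norm_one] at htri
  dsimp only
  linarith

end TwoStep

noncomputable def oscillatingCoeff (n : ℕ) : ℂ :=
  if Odd n then 2 ^ n else (2 ^ (n + 3))⁻¹

lemma norm_oscillatingCoeff_succ_mul_le (n : ℕ) :
    ‖oscillatingCoeff (n + 1) * oscillatingCoeff n‖ ≤ 1 / 4 := by
  rcases Nat.even_or_odd n with hn | hn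
  · have hn1 : Odd (n + 1) := hn.add_one
    simp only [oscillatingCoeff, hn1, Nat.not_odd_iff_even.mpr hn, if_true, if_false]
    have : (2 : ℂ) ^ (n + 1) * (2 ^ (n + 3))⁻¹ = 1 / 4 := by
      field_simp
      ring
    norm_num [this]
  · have hn1 : ¬ Odd (n + 1) := Nat.not_odd_iff_even.mpr hn.add_one
    simp only [oscillatingCoeff, hn1, hn, if_true, if_false]
    have : (2 ^ (n + 1 + 3) : ℂ)⁻¹ * 2 ^ n = 1 / 16 := by
      field_simp
      ring
    norm_num [this]

lemma not_bddAbove_norm_oscillatingCoeff :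
    ¬ BddAbove (range fun n => ‖oscillatingCoeff (n + 2)‖) := by
  rintro ⟨B, hB⟩
  obtain ⟨k, hk⟩ := exists_nat_gt B
  have hodd : Odd (2 * k + 1 + 2) := ⟨k + 1, by ring⟩
  have := hB ⟨2 * k + 1, rfl⟩
  simp only [oscillatingCoeff, hodd, if_true, norm_pow, Complex.norm_ofNat] at this
  have : (k : ℝ) < 2 ^ (2 * k + 1 + 2) := by
    exact_mod_cast (Nat.lt_two_pow_self).trans (Nat.pow_lt_pow_right one_lt_two (by omega))
  linarith

theorem stmt_16 (h : ℕ → ℂ → ℂ)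
    (hh : ∀ n z, h n z = if Odd n then 2 ^ n * z else z / 2 ^ (n + 3)) :
    ∀ ε > (0 : ℝ), ∃ a : ℕ → ℂ,
      (∀ n ≥ 1, ‖a (n + 1) - h n (a n)‖ ≤ ε) ∧
        ∀ b : ℕ → ℂ, (∀ n ≥ 1, b (n + 1) = h n (b n)) →
          ¬ BddAbove (Set.range fun n : ℕ => ‖b n - a n‖) := by
  intro ε hε
  have hc : ∀ n z, h n z = oscillatingCoeff n * z := fun n z => by
    rw [hh, oscillatingCoeff]
    split_ifs <;> ring
  set a := perturbedSolution oscillatingCoeff ε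
  have ha : ∀ n, a (n + 1) = oscillatingCoeff n * a n + ε := fun _ => rfl
  refine ⟨a, fun n _ => ?_, fun b hb => ?_⟩
  · rw [ha, hc, add_sub_cancel_left, Complex.norm_real, Real.norm_of_nonneg hε.le]
  · refine not_bddAbove_norm_sub_of_two_step_bdd (by exact_mod_cast hε.ne')
      norm_oscillatingCoeff_succ_mul_le not_bddAbove_norm_oscillatingCoeff
      (fun n _ => ha n) fun n hn => ?_
    rw [hb n hn, hc]
end

section
/- Define f : ℕ → ℝ → ℝ by f n x = 3x + (1/n)·sin(x/n). Then for all n ≥ 1 and all u ≠ v, the difference quotient satisfies (f n u - f n v)/(u - v) ≥ 3 - 1/n², and the difference equation b_{n+1} = f n b_n on ℝ has Hyers-Ulam stability. -/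
/-!
Each map `f n` stretches distances by a factor at least `3 - n⁻² ≥ 2`, because the perturbation
`n⁻¹ sin (x / n)` is `n⁻²`-Lipschitz. By the intermediate value theorem a continuous map stretching
distances by `L > 1` sends the closed ball of radius `δ = ε / (L - 1)` around `a n` onto a set
containing the ball of radius `δ` around `a (n + 1)`. Pulling such balls back along the maps gives,
for every `m`, a point whose trajectory stays `δ`-close to `a` up to time `m`, and compactness of
the first ball yields one that stays close forever.
-/

open Set Metric

section Trajectory

variable {X : Type*}

def trajectory (f : ℕ → X → X) (x : X) : ℕ → X
  | 0 => x
  | n + 1 => f n (trajectory f x n)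

variable {f : ℕ → X → X} {K : ℕ → Set X}

theorem continuous_trajectory [TopologicalSpace X] (hf : ∀ n, Continuous (f n)) (n : ℕ) :
    Continuous fun x => trajectory f x n := by
  induction n with
  | zero => exact continuous_id
  | succ n ih => exact (hf n).comp ih

theorem exists_trajectory_eq_of_subset_image (himage : ∀ n, K (n + 1) ⊆ f n '' K n) {m : ℕ}
    {y : X} (hy : y ∈ K m) : ∃ x, trajectory f x m = y ∧ ∀ k ≤ m, trajectory f x k ∈ K k := by
  induction m generalizing y with
  | zero => exact ⟨y, rfl, fun k hk => by rwa [Nat.le_zero.mp hk]⟩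
  | succ m ih =>
    obtain ⟨z, hz, rfl⟩ := himage m hy
    obtain ⟨x, hxz, hx⟩ := ih hz
    refine ⟨x, by rw [trajectory, hxz], fun k hk => ?_⟩
    rcases Nat.of_le_succ hk with hk | rfl
    · exact hx k hk
    · rwa [trajectory, hxz]

theorem exists_forall_trajectory_mem [TopologicalSpace X] (hf : ∀ n, Continuous (f n))
    (hK0 : IsCompact (K 0)) (hK : ∀ n, IsClosed (K n)) (hne : ∀ n, (K n).Nonempty)
    (himage : ∀ n, K (n + 1) ⊆ f n '' K n) : ∃ x, ∀ n, trajectory f x n ∈ K n := by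
  let T n := (fun x => trajectory f x n) ⁻¹' K n
  obtain ⟨x, -, hx⟩ := hK0.inter_iInter_nonempty T
    (fun n => (hK n).preimage (continuous_trajectory hf n)) fun u => by
      obtain ⟨x, -, hx⟩ := exists_trajectory_eq_of_subset_image himage (hne (u.sup id)).some_mem
      exact ⟨x, hx 0 (Nat.zero_le _), mem_iInter₂.mpr fun k hk => hx k (u.le_sup (f := id) hk)⟩
  exact ⟨x, mem_iInter.mp hx⟩

end Trajectory

section Expanding

variable {L : ℝ}

theorem closedBall_subset_image_closedBall {f : ℝ → ℝ} (hf : Continuous f)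
    (hexp : ∀ u v, u ≤ v → L * (v - u) ≤ f v - f u) (x : ℝ) {s : ℝ} (hs : 0 ≤ s) :
    closedBall (f x) (L * s) ⊆ f '' closedBall x s := by
  have hleft : f (x - s) ≤ f x - L * s := by linarith [hexp (x - s) x (by linarith)]
  have hright : f x + L * s ≤ f (x + s) := by linarith [hexp x (x + s) (by linarith)]
  rw [Real.closedBall_eq_Icc, Real.closedBall_eq_Icc]
  exact (Icc_subset_Icc hleft hright).trans
    (intermediate_value_Icc (by linarith) hf.continuousOn)

theorem exists_trajectory_dist_le_of_expanding (f : ℕ → ℝ → ℝ) (hL : 1 < L)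
    (hf : ∀ n, Continuous (f n)) (hexp : ∀ n u v, u ≤ v → L * (v - u) ≤ f n v - f n u)
    {ε : ℝ} (hε : 0 ≤ ε) (a : ℕ → ℝ) (ha : ∀ n, |a (n + 1) - f n (a n)| ≤ ε) :
    ∃ x, ∀ n, |trajectory f x n - a n| ≤ ε / (L - 1) := by
  set δ := ε / (L - 1)
  have hδ : 0 ≤ δ := div_nonneg hε (by linarith)
  have hLδ : ε + δ = L * δ := by
    linear_combination -div_mul_cancel₀ ε (by linarith : L - 1 ≠ 0)
  obtain ⟨x, hx⟩ := exists_forall_trajectory_mem (K := fun n => closedBall (a n) δ) hf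
    (isCompact_closedBall _ _) (fun _ => isClosed_closedBall)
    (fun _ => nonempty_closedBall.mpr hδ) fun n =>
      (closedBall_subset_closedBall' (by rw [Real.dist_eq]; linarith [ha n])).trans
        (closedBall_subset_image_closedBall (hf n) (hexp n) (a n) hδ)
  exact ⟨x, fun n => by simpa [Real.dist_eq] using hx n⟩

theorem le_div_sub_of_expanding {f : ℝ → ℝ} (hexp : ∀ u v, u ≤ v → L * (v - u) ≤ f v - f u)
    {u v : ℝ} (huv : u ≠ v) : L ≤ (f u - f v) / (u - v) := by
  rcases huv.lt_or_gt with h | h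
  · rw [← neg_div_neg_eq, neg_sub, neg_sub, le_div_iff₀ (by linarith)]
    exact hexp u v h.le
  · rw [le_div_iff₀ (by linarith)]
    exact hexp v u h.le

end Expanding

theorem sub_le_add_sin_div (c t : ℝ) {u v : ℝ} (huv : u ≤ v) :
    (c - 1 / t ^ 2) * (v - u) ≤
      c * v + 1 / t * Real.sin (v / t) - (c * u + 1 / t * Real.sin (u / t)) := by
  have hsin : |1 / t * (Real.sin (v / t) - Real.sin (u / t))| ≤ 1 / t ^ 2 * (v - u) :=
    calc |1 / t * (Real.sin (v / t) - Real.sin (u / t))|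
        ≤ |1 / t| * |v / t - u / t| := by
          rw [abs_mul]
          exact mul_le_mul_of_nonneg_left (Real.abs_sin_sub_sin_le _ _) (abs_nonneg _)
      _ = 1 / t ^ 2 * (v - u) := by
          rw [← abs_mul, show 1 / t * (v / t - u / t) = 1 / t ^ 2 * (v - u) by ring,
            abs_of_nonneg (mul_nonneg (by positivity) (sub_nonneg.mpr huv))]
  linarith [(abs_le.mp hsin).1]

theorem stmt_17 (f : ℕ → ℝ → ℝ)
    (hf : ∀ n x, f n x = 3 * x + (1 / n) * Real.sin (x / n)) :
    (∀ n : ℕ, 1 ≤ n → ∀ u v : ℝ, u ≠ v →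
        3 - 1 / (n : ℝ) ^ 2 ≤ (f n u - f n v) / (u - v)) ∧
      ∃ C > (0 : ℝ), ∃ ε₀ > (0 : ℝ), ∀ ε : ℝ, 0 < ε → ε ≤ ε₀ →
        ∀ a : ℕ → ℝ, (∀ n ≥ 1, |a (n + 1) - f n (a n)| ≤ ε) →
          ∃ b : ℕ → ℝ, (∀ n ≥ 1, b (n + 1) = f n (b n)) ∧
            ∀ n ≥ 1, |b n - a n| ≤ C * ε := by
  have hexp (n : ℕ) (u v : ℝ) (h : u ≤ v) : (3 - 1 / (n : ℝ) ^ 2) * (v - u) ≤ f n v - f n u := by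
    rw [hf, hf]
    exact sub_le_add_sin_div 3 n h
  refine ⟨fun n _ u v huv => le_div_sub_of_expanding (hexp n) huv,
    1, one_pos, 1, one_pos, fun ε hε _ a ha => ?_⟩
  have hexp₂ (n : ℕ) (u v : ℝ) (h : u ≤ v) : 2 * (v - u) ≤ f (n + 1) v - f (n + 1) u := by
    have : 1 / ((n + 1 : ℕ) : ℝ) ^ 2 ≤ 1 :=
      div_le_one_of_le₀ (one_le_pow₀ (by exact_mod_cast n.succ_pos)) (by positivity)
    exact (mul_le_mul_of_nonneg_right (by linarith) (sub_nonneg.mpr h)).trans (hexp _ u v h)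
  have hcont (n : ℕ) : Continuous (f n) := by
    rw [funext (hf n)]
    fun_prop
  obtain ⟨x, hx⟩ := exists_trajectory_dist_le_of_expanding (fun n => f (n + 1)) one_lt_two
    (fun n => hcont _) hexp₂ hε.le (fun n => a (n + 1)) fun n => ha (n + 1) n.succ_pos
  refine ⟨fun n => trajectory (fun n => f (n + 1)) x (n - 1), ?_, ?_⟩
  · intro n hn
    obtain ⟨k, rfl⟩ := Nat.exists_eq_add_of_le' hn
    rfl
  · intro n hn
    obtain ⟨k, rfl⟩ := Nat.exists_eq_add_of_le' hn
    exact (hx k).trans_eq (by norm_num)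
end
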